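/- arXiv:1708.02093 — 3 statements merged into one kernel-verified Lean document; each statement's English description precedes it below -/
import Mathlib

section
/- In the group G = ⟨a, b | a³, b³, (ab)³, (ab⁻¹)³⟩, the commutator [a,b] is central. -/
/-!
Since `b³ = 1`, `b = b⁻²`; the relator `(ab)³` rewrites `aba` as `b⁻¹a⁻¹b⁻¹`, and the relator
`(ab⁻¹)³` (up to conjugation) rewrites `b⁻¹ab⁻¹` as `a⁻¹ba⁻¹`. These three rules turn both
`a · a⁻¹b⁻¹ab = b⁻¹ab` and `a⁻¹b⁻¹ab · a` into `a⁻¹ba⁻¹b⁻¹`. Swapping `a` and `b` preserves the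
relators up to conjugation and inversion and inverts the commutator, so `[a,b]` also commutes
with `b`, hence with the whole group generated by `a` and `b`.
-/

open FreeGroup

section PowThree

variable {G : Type*} [Group G] {a b : G}

theorem inv_eq_mul_self_of_pow_three (h : a ^ 3 = 1) : a⁻¹ = a * a :=
  inv_eq_of_mul_eq_one_right (by rwa [← pow_three])

theorem mul_mul_eq_of_mul_pow_three (h : (a * b) ^ 3 = 1) : a * b * a = b⁻¹ * a⁻¹ * b⁻¹ :=
  calc a * b * a = a * b * (a * b) * b⁻¹ := by group
    _ = (a * b)⁻¹ * b⁻¹ := by rw [inv_eq_mul_self_of_pow_three h]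
    _ = b⁻¹ * a⁻¹ * b⁻¹ := by group

theorem mul_pow_three_comm (h : (a * b) ^ 3 = 1) : (b * a) ^ 3 = 1 := by
  rw [show b * a = b * (a * b) * b⁻¹ by group, conj_pow, h, mul_one, mul_inv_cancel]

theorem commute_left_inv_mul_inv_mul_mul (hb : b ^ 3 = 1) (hab : (a * b) ^ 3 = 1)
    (hab' : (a * b⁻¹) ^ 3 = 1) : Commute a (a⁻¹ * b⁻¹ * a * b) := by
  have hb' : b⁻¹ * b⁻¹ = b := by
    rw [← inv_eq_mul_self_of_pow_three (by rw [inv_pow, hb, inv_one]), inv_inv]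
  have hba' : b⁻¹ * a * b⁻¹ = a⁻¹ * b * a⁻¹ := by
    simpa only [inv_inv] using mul_mul_eq_of_mul_pow_three (mul_pow_three_comm hab')
  calc a * (a⁻¹ * b⁻¹ * a * b) = b⁻¹ * a * b := by group
    _ = b⁻¹ * a * b⁻¹ * b⁻¹ := by rw [mul_assoc _ b⁻¹ b⁻¹, hb']
    _ = a⁻¹ * b * a⁻¹ * b⁻¹ := by rw [hba']
    _ = a⁻¹ * b⁻¹ * b⁻¹ * a⁻¹ * b⁻¹ := by rw [mul_assoc a⁻¹ b⁻¹ b⁻¹, hb']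
    _ = a⁻¹ * b⁻¹ * (a * b * a) := by rw [mul_mul_eq_of_mul_pow_three hab]; group
    _ = (a⁻¹ * b⁻¹ * a * b) * a := by group

theorem commute_right_inv_mul_inv_mul_mul (ha : a ^ 3 = 1) (hab : (a * b) ^ 3 = 1)
    (hab' : (a * b⁻¹) ^ 3 = 1) : Commute b (a⁻¹ * b⁻¹ * a * b) := by
  have hba' : (b * a⁻¹) ^ 3 = 1 := by
    rw [← inv_inv b, ← mul_inv_rev, inv_pow, hab', inv_one]
  have h := (commute_left_inv_mul_inv_mul_mul ha (mul_pow_three_comm hab) hba').inv_right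
  rwa [show (b⁻¹ * a⁻¹ * b * a)⁻¹ = a⁻¹ * b⁻¹ * a * b by group] at h

end PowThree

theorem PresentedGroup.mem_center_of_forall_commute_of {α : Type*} {rels : Set (FreeGroup α)}
    {z : PresentedGroup rels} (h : ∀ x, Commute (of x) z) :
    z ∈ Subgroup.center (PresentedGroup rels) := by
  rw [← Subgroup.centralizer_univ, ← Subgroup.coe_top, ← closure_range_of rels,
    Subgroup.centralizer_closure, Subgroup.mem_centralizer_iff]
  rintro _ ⟨x, rfl⟩
  exact h x

/-- In `G = ⟨a, b | a³, b³, (ab)³, (ab⁻¹)³⟩`, the commutator `[a,b] = a⁻¹b⁻¹ab`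
is central. -/
theorem stmt_1 :
    letI N : Subgroup (FreeGroup (Fin 2)) := Subgroup.normalClosure
      {(of 0 : FreeGroup (Fin 2)) ^ 3, (of 1 : FreeGroup (Fin 2)) ^ 3,
        (of 0 * of 1 : FreeGroup (Fin 2)) ^ 3,
        (of 0 * (of 1)⁻¹ : FreeGroup (Fin 2)) ^ 3}
    (QuotientGroup.mk (of 0 : FreeGroup (Fin 2)) : FreeGroup (Fin 2) ⧸ N)⁻¹ *
        (QuotientGroup.mk (of 1))⁻¹ * QuotientGroup.mk (of 0) * QuotientGroup.mk (of 1) ∈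
      Subgroup.center (FreeGroup (Fin 2) ⧸ N) := by
  -- `FreeGroup (Fin 2) ⧸ N` is by definition the presented group on the four relators.
  refine PresentedGroup.mem_center_of_forall_commute_of fun i ↦ ?_
  fin_cases i
  · exact commute_left_inv_mul_inv_mul_mul (PresentedGroup.one_of_mem (x := of 1 ^ 3) (by simp))
      (PresentedGroup.one_of_mem (x := (of 0 * of 1) ^ 3) (by simp))
      (PresentedGroup.one_of_mem (x := (of 0 * (of 1)⁻¹) ^ 3) (by simp))
  · exact commute_right_inv_mul_inv_mul_mul (PresentedGroup.one_of_mem (x := of 0 ^ 3) (by simp))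
      (PresentedGroup.one_of_mem (x := (of 0 * of 1) ^ 3) (by simp))
      (PresentedGroup.one_of_mem (x := (of 0 * (of 1)⁻¹) ^ 3) (by simp))
end

section
/- For odd k ≥ 3, the additive subgroup of the k×k matrices over ℤ[ω] (ω = e^{2πi/k}) generated by the image of ρ_k has finite index: it contains k·ω^n·E_{i,j} for all i, j ∈ {1,…,k} and n ∈ {0,…,k-1}, where E_{i,j} is the matrix unit. -/
/-!
Because `k` is odd, `ω²` is again a primitive `k`-th root of unity, so by orthogonality
`∑_{m<k} ρ(a)^{2m} = k·E₀₀`. Multiplying by powers of the cyclic shift `ρ(b)` on either side moves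
this matrix unit anywhere, and `ρ(a)ⁿ` scales row `1` by `ωⁿ`:
`k ωⁿ E_{ij} = ρ(b)^{1-i} ρ(a)ⁿ ρ(b)^{-1} (∑_{m<k} ρ(a)^{2m}) ρ(b)^j`.
The additive closure of a multiplicative monoid is the subring it generates, so this lies in it.
-/

open Matrix
open Fin.NatCast
open Fin.CommRing

/-- `ρ_k(a) = diag(1, ω, …, ω^{k-1})` where `ω = e^{2πi/k}`. -/
noncomputable def rhoA (k : ℕ) : Matrix (Fin k) (Fin k) ℂ :=
  diagonal fun i => Complex.exp (2 * Real.pi * Complex.I / k) ^ (i : ℕ)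

/-- `ρ_k(b)`, the cyclic permutation matrix with `(i,j)` entry `1` iff `j ≡ i+1 (mod k)`. -/
def rhoB (k : ℕ) : Matrix (Fin k) (Fin k) ℂ :=
  Matrix.of fun i j => if (j : ℕ) % k = ((i : ℕ) + 1) % k then 1 else 0

section RootsOfUnity

variable {R : Type*} [CommRing R] [IsDomain R] {k : ℕ} [NeZero k] {ζ : R}

theorem IsPrimitiveRoot.geom_sum_pow_val (hζ : IsPrimitiveRoot ζ k) (p : Fin k) :
    ∑ m ∈ Finset.range k, (ζ ^ (p : ℕ)) ^ m = if p = 0 then (k : R) else 0 := by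
  split_ifs with hp
  · simp [hp]
  · have hne : ζ ^ (p : ℕ) ≠ 1 :=
      hζ.pow_ne_one_of_pos_of_lt (Fin.val_ne_zero_iff.mpr hp) p.isLt
    have hroot : (ζ ^ (p : ℕ)) ^ k = 1 := by
      rw [← pow_mul, mul_comm, pow_mul, hζ.pow_eq_one, one_pow]
    have hmul := geom_sum_mul (ζ ^ (p : ℕ)) k
    rw [hroot, sub_self] at hmul
    exact (mul_eq_zero.mp hmul).resolve_right (sub_ne_zero.mpr hne)

theorem IsPrimitiveRoot.sum_pow_diagonal_eq_single (hζ : IsPrimitiveRoot ζ k) :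
    ∑ m ∈ Finset.range k, (diagonal fun p : Fin k => ζ ^ (p : ℕ)) ^ m = single 0 0 (k : R) := by
  have hdiag : (fun p : Fin k => ∑ m ∈ Finset.range k, (ζ ^ (p : ℕ)) ^ m) = Pi.single 0 (k : R) := by
    funext p
    rw [hζ.geom_sum_pow_val, Pi.single_apply]
  rw [← diagonal_single, ← hdiag]
  ext p q
  simp only [Matrix.sum_apply, diagonal_pow, diagonal_apply, Pi.pow_apply]
  split_ifs <;> simp

end RootsOfUnity

theorem Matrix.diagonal_mul_single {n α : Type*} [Fintype n] [DecidableEq n]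
    [NonUnitalNonAssocSemiring α] (d : n → α) (a b : n) (c : α) :
    diagonal d * single a b c = single a b (d a * c) := by
  ext p q
  rw [diagonal_mul, single_apply, single_apply]
  split_ifs with h
  · rw [h.1]
  · rw [mul_zero]

section Generators

variable {k : ℕ} [NeZero k]

theorem rhoB_apply (p q : Fin k) : rhoB k p q = if q = p + 1 then 1 else 0 := by
  simp only [rhoB, of_apply, Fin.ext_iff, Fin.val_add, Fin.val_one', Nat.add_mod_mod,
    Nat.mod_eq_of_lt q.isLt]

theorem rhoB_mul_apply (M : Matrix (Fin k) (Fin k) ℂ) (p q : Fin k) :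
    (rhoB k * M) p q = M (p + 1) q := by
  simp only [mul_apply, rhoB_apply, ite_mul, one_mul, zero_mul, Finset.sum_ite_eq',
    Finset.mem_univ, if_true]

theorem mul_rhoB_apply (M : Matrix (Fin k) (Fin k) ℂ) (p q : Fin k) :
    (M * rhoB k) p q = M p (q - 1) := by
  simp only [mul_apply, rhoB_apply, mul_ite, mul_one, mul_zero, ← sub_eq_iff_eq_add,
    Finset.sum_ite_eq, Finset.mem_univ, if_true]

theorem rhoB_pow_mul_single (t : ℕ) (a b : Fin k) (c : ℂ) :
    rhoB k ^ t * single a b c = single (a - t) b c := by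
  induction t with
  | zero => simp
  | succ t ih =>
    ext p q
    simp only [pow_succ', mul_assoc, rhoB_mul_apply, ih, single_apply, Nat.cast_succ,
      sub_add_eq_sub_sub, sub_eq_iff_eq_add]

theorem single_mul_rhoB_pow (t : ℕ) (a b : Fin k) (c : ℂ) :
    single a b c * rhoB k ^ t = single a (b + t) c := by
  induction t with
  | zero => simp
  | succ t ih =>
    ext p q
    simp only [pow_succ, ← mul_assoc, mul_rhoB_apply, ih, single_apply, Nat.cast_succ,
      ← add_assoc, eq_sub_iff_add_eq]

theorem sum_rhoA_sq_pow (hodd : Odd k) :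
    ∑ m ∈ Finset.range k, (rhoA k ^ 2) ^ m = single 0 0 (k : ℂ) := by
  set ω := Complex.exp (2 * Real.pi * Complex.I / k)
  have hω : IsPrimitiveRoot (ω ^ 2) k :=
    (Complex.isPrimitiveRoot_exp k (NeZero.ne k)).pow_of_coprime 2 (Nat.coprime_two_left.mpr hodd)
  have hsq : rhoA k ^ 2 = diagonal fun p : Fin k => (ω ^ 2) ^ (p : ℕ) := by
    rw [rhoA, diagonal_pow]
    congr 1
    funext p
    rw [Pi.pow_apply, ← pow_mul, ← pow_mul, Nat.mul_comm]
  rw [hsq]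
  exact hω.sum_pow_diagonal_eq_single

end Generators

theorem stmt_13_general (k : ℕ) (hodd : Odd k) (i j : Fin k) (n : ℕ) :
    Matrix.single i j ((k : ℂ) * Complex.exp (2 * Real.pi * Complex.I / k) ^ n) ∈
      AddSubgroup.closure
        ((Submonoid.closure {rhoA k, rhoB k} : Submonoid (Matrix (Fin k) (Fin k) ℂ)) :
          Set (Matrix (Fin k) (Fin k) ℂ)) := by
  have : NeZero k := ⟨hodd.pos.ne'⟩
  set ω := Complex.exp (2 * Real.pi * Complex.I / k)
  have hω : IsPrimitiveRoot ω k := Complex.isPrimitiveRoot_exp k (NeZero.ne k)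
  have hrhoA : rhoA k = diagonal fun p : Fin k => ω ^ (p : ℕ) := rfl
  have hfactor : single i j ((k : ℂ) * ω ^ n) = rhoB k ^ ((1 - i : Fin k) : ℕ) * (rhoA k ^ n *
      (rhoB k ^ ((-1 : Fin k) : ℕ) *
        ((∑ m ∈ Finset.range k, (rhoA k ^ 2) ^ m) * rhoB k ^ (j : ℕ)))) := by
    rw [sum_rhoA_sq_pow hodd, single_mul_rhoB_pow, rhoB_pow_mul_single, hrhoA, diagonal_pow,
      diagonal_mul_single, rhoB_pow_mul_single]
    have hω1 : ω ^ ((1 : Fin k) : ℕ) = ω := by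
      rw [Fin.val_one', hω.eq_orderOf, pow_mod_orderOf, pow_one]
    simp only [Fin.cast_val_eq_self, sub_neg_eq_add, zero_add, sub_sub_cancel, Pi.pow_apply, hω1,
      mul_comm]
  refine Subring.mem_closure_iff.mp ?_
  have hA : rhoA k ∈ Subring.closure {rhoA k, rhoB k} := Subring.subset_closure (by simp)
  have hB : rhoB k ∈ Subring.closure {rhoA k, rhoB k} := Subring.subset_closure (by simp)
  rw [hfactor]
  exact mul_mem (pow_mem hB _) (mul_mem (pow_mem hA n) (mul_mem (pow_mem hB _)
    (mul_mem (Subring.sum_mem _ fun m _ => pow_mem (pow_mem hA 2) m) (pow_mem hB _))))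

/-- For odd `k ≥ 3`, the additive subgroup of `k×k` matrices generated by the image of
`ρ_k` contains `k·ωⁿ·E_{i,j}` for all indices `i, j` and all `0 ≤ n ≤ k-1`, where
`E_{i,j}` is the matrix unit (hence it has finite index in the matrices over `ℤ[ω]`). -/
theorem stmt_13 (k : ℕ) (hk : 3 ≤ k) (hodd : Odd k) (i j : Fin k) (n : ℕ) (hn : n ≤ k - 1) :
    Matrix.single i j ((k : ℂ) * Complex.exp (2 * Real.pi * Complex.I / k) ^ n) ∈
      AddSubgroup.closure
        ((Submonoid.closure {rhoA k, rhoB k} : Submonoid (Matrix (Fin k) (Fin k) ℂ)) :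
          Set (Matrix (Fin k) (Fin k) ℂ)) :=
  stmt_13_general k hodd i j n
end

section
/- The additive subgroup of 2×2 complex matrices generated by the image of ρ_4 (where ρ_4(a)=[[i,0],[0,-i]], ρ_4(b)=[[0,1],[-1,0]]) equals the set of matrices of the form [[x, -conj(y)],[y, conj(x)]] with x, y ∈ ℤ[i]. -/
open FreeGroup Matrix

/-- `ρ₄(a) = [[i,0],[0,-i]]` as a unit of the matrix ring. -/
noncomputable def rho4a : (Matrix (Fin 2) (Fin 2) ℂ)ˣ :=
  ⟨!![Complex.I, 0; 0, -Complex.I], !![-Complex.I, 0; 0, Complex.I],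
    by ext i j; fin_cases i <;> fin_cases j <;>
      simp [Matrix.mul_apply, Fin.sum_univ_two, Matrix.one_apply, Complex.I_mul_I],
    by ext i j; fin_cases i <;> fin_cases j <;>
      simp [Matrix.mul_apply, Fin.sum_univ_two, Matrix.one_apply, Complex.I_mul_I]⟩

/-- `ρ₄(b) = [[0,1],[-1,0]]` as a unit of the matrix ring. -/
noncomputable def rho4b : (Matrix (Fin 2) (Fin 2) ℂ)ˣ :=
  ⟨!![0, 1; -1, 0], !![0, -1; 1, 0],
    by ext i j; fin_cases i <;> fin_cases j <;>
      simp [Matrix.mul_apply, Fin.sum_univ_two, Matrix.one_apply],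
    by ext i j; fin_cases i <;> fin_cases j <;>
      simp [Matrix.mul_apply, Fin.sum_univ_two, Matrix.one_apply]⟩

/-- The representation `ρ₄ : F₂ → GL(2,ℂ)`. -/
noncomputable def rho4 : FreeGroup (Fin 2) →* (Matrix (Fin 2) (Fin 2) ℂ)ˣ :=
  FreeGroup.lift ![rho4a, rho4b]

/-!
The matrices `[[x, -conj y], [y, conj x]]` with `x, y ∈ ℤ[i]` form a subring (a copy of the
Lipschitz quaternions), which contains `ρ₄(a)`, `ρ₄(b)` and their inverses, hence all of the image
of `ρ₄`. Conversely, as an abelian group this subring is free on `1 = ρ₄(1)`, `ρ₄(a)`, `ρ₄(b)` and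
`ρ₄(ab)`.
-/

open ComplexConjugate

noncomputable def lipschitzMatrix (x y : GaussianInt) : Matrix (Fin 2) (Fin 2) ℂ :=
  !![(x : ℂ), -conj (y : ℂ); (y : ℂ), conj (x : ℂ)]

lemma lipschitzMatrix_add (x₁ y₁ x₂ y₂ : GaussianInt) :
    lipschitzMatrix x₁ y₁ + lipschitzMatrix x₂ y₂ = lipschitzMatrix (x₁ + x₂) (y₁ + y₂) := by
  ext i j
  fin_cases i <;> fin_cases j <;> simp [lipschitzMatrix, add_comm]

lemma lipschitzMatrix_neg (x y : GaussianInt) :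
    -lipschitzMatrix x y = lipschitzMatrix (-x) (-y) := by
  ext i j
  fin_cases i <;> fin_cases j <;> simp [lipschitzMatrix]

lemma lipschitzMatrix_zsmul (n : ℤ) (x y : GaussianInt) :
    n • lipschitzMatrix x y = lipschitzMatrix (n • x) (n • y) := by
  ext i j
  fin_cases i <;> fin_cases j <;> simp [lipschitzMatrix, zsmul_eq_mul]

lemma lipschitzMatrix_mul (x₁ y₁ x₂ y₂ : GaussianInt) :
    lipschitzMatrix x₁ y₁ * lipschitzMatrix x₂ y₂ =
      lipschitzMatrix (x₁ * x₂ - star y₁ * y₂) (y₁ * x₂ + star x₁ * y₂) := by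
  ext i j
  fin_cases i <;> fin_cases j <;>
    simp [lipschitzMatrix, Matrix.mul_apply, Fin.sum_univ_two, GaussianInt.toComplex_star] <;> ring

lemma lipschitzMatrix_zero : lipschitzMatrix 0 0 = 0 := by
  ext i j
  fin_cases i <;> fin_cases j <;> simp [lipschitzMatrix]

lemma lipschitzMatrix_one : lipschitzMatrix 1 0 = 1 := by
  ext i j
  fin_cases i <;> fin_cases j <;> simp [lipschitzMatrix]

noncomputable def lipschitzSubring : Subring (Matrix (Fin 2) (Fin 2) ℂ) where
  carrier := {M | ∃ x y, M = lipschitzMatrix x y}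
  zero_mem' := ⟨0, 0, lipschitzMatrix_zero.symm⟩
  one_mem' := ⟨1, 0, lipschitzMatrix_one.symm⟩
  add_mem' := by
    rintro _ _ ⟨x₁, y₁, rfl⟩ ⟨x₂, y₂, rfl⟩
    exact ⟨_, _, lipschitzMatrix_add x₁ y₁ x₂ y₂⟩
  neg_mem' := by
    rintro _ ⟨x, y, rfl⟩
    exact ⟨_, _, lipschitzMatrix_neg x y⟩
  mul_mem' := by
    rintro _ _ ⟨x₁, y₁, rfl⟩ ⟨x₂, y₂, rfl⟩
    exact ⟨_, _, lipschitzMatrix_mul x₁ y₁ x₂ y₂⟩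

lemma lipschitzMatrix_mem_lipschitzSubring (x y : GaussianInt) :
    lipschitzMatrix x y ∈ lipschitzSubring :=
  ⟨x, y, rfl⟩

lemma coe_rho4a : (rho4a : Matrix (Fin 2) (Fin 2) ℂ) = lipschitzMatrix ⟨0, 1⟩ 0 := by
  ext i j
  fin_cases i <;> fin_cases j <;> simp [rho4a, lipschitzMatrix, GaussianInt.toComplex_def']

lemma coe_rho4a_inv :
    ((rho4a⁻¹ : _ˣ) : Matrix (Fin 2) (Fin 2) ℂ) = lipschitzMatrix ⟨0, -1⟩ 0 := by
  ext i j
  fin_cases i <;> fin_cases j <;> simp [rho4a, lipschitzMatrix, GaussianInt.toComplex_def']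

lemma coe_rho4b : (rho4b : Matrix (Fin 2) (Fin 2) ℂ) = lipschitzMatrix 0 ⟨-1, 0⟩ := by
  ext i j
  fin_cases i <;> fin_cases j <;> simp [rho4b, lipschitzMatrix, GaussianInt.toComplex_def']

lemma coe_rho4b_inv :
    ((rho4b⁻¹ : _ˣ) : Matrix (Fin 2) (Fin 2) ℂ) = lipschitzMatrix 0 ⟨1, 0⟩ := by
  ext i j
  fin_cases i <;> fin_cases j <;> simp [rho4b, lipschitzMatrix, GaussianInt.toComplex_def']

lemma coe_rho4a_mul_rho4b :
    ((rho4a * rho4b : _ˣ) : Matrix (Fin 2) (Fin 2) ℂ) = lipschitzMatrix 0 ⟨0, 1⟩ := by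
  rw [Units.val_mul, coe_rho4a, coe_rho4b, lipschitzMatrix_mul]
  congr 1

lemma rho4_of_zero : rho4 (of 0) = rho4a := by simp [rho4]

lemma rho4_of_one : rho4 (of 1) = rho4b := by simp [rho4]

lemma range_rho4_le_units : rho4.range ≤ lipschitzSubring.toSubmonoid.units := by
  rw [rho4, FreeGroup.range_lift_eq_closure, Subgroup.closure_le]
  rintro _ ⟨i, rfl⟩
  rw [SetLike.mem_coe, Submonoid.mem_units_iff]
  fin_cases i
  · exact ⟨coe_rho4a ▸ lipschitzMatrix_mem_lipschitzSubring _ _,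
      coe_rho4a_inv ▸ lipschitzMatrix_mem_lipschitzSubring _ _⟩
  · exact ⟨coe_rho4b ▸ lipschitzMatrix_mem_lipschitzSubring _ _,
      coe_rho4b_inv ▸ lipschitzMatrix_mem_lipschitzSubring _ _⟩

lemma lipschitzMatrix_eq_zsmul_add (x y : GaussianInt) :
    lipschitzMatrix x y = x.re • (1 : Matrix (Fin 2) (Fin 2) ℂ) + x.im • (rho4a : Matrix _ _ ℂ) +
      (-y.re) • (rho4b : Matrix _ _ ℂ) + y.im • ((rho4a * rho4b : _ˣ) : Matrix _ _ ℂ) := by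
  rw [← lipschitzMatrix_one, coe_rho4a, coe_rho4b, coe_rho4a_mul_rho4b]
  simp only [lipschitzMatrix_zsmul, lipschitzMatrix_add]
  congr 1 <;> ext <;> simp

lemma lipschitzMatrix_mem_of_forall_rho4_mem {G : AddSubgroup (Matrix (Fin 2) (Fin 2) ℂ)}
    (hG : ∀ g, (rho4 g : Matrix (Fin 2) (Fin 2) ℂ) ∈ G) (x y : GaussianInt) :
    lipschitzMatrix x y ∈ G := by
  have h1 : (1 : Matrix (Fin 2) (Fin 2) ℂ) ∈ G := by simpa using hG 1
  have ha := rho4_of_zero ▸ hG (of 0)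
  have hb := rho4_of_one ▸ hG (of 1)
  have hab := hG (of 0 * of 1)
  rw [_root_.map_mul, rho4_of_zero, rho4_of_one] at hab
  rw [lipschitzMatrix_eq_zsmul_add]
  exact add_mem (add_mem (add_mem (zsmul_mem h1 _) (zsmul_mem ha _)) (zsmul_mem hb _))
    (zsmul_mem hab _)

/-- The additive subgroup of 2×2 complex matrices generated by the image of `ρ₄`
equals the set of matrices `[[x, -conj y],[y, conj x]]` with `x, y ∈ ℤ[i]`. -/
theorem stmt_16 :
    (AddSubgroup.closure ((fun u : (Matrix (Fin 2) (Fin 2) ℂ)ˣ => (u : Matrix (Fin 2) (Fin 2) ℂ)) ''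
        (rho4.range : Set (Matrix (Fin 2) (Fin 2) ℂ)ˣ)) : Set (Matrix (Fin 2) (Fin 2) ℂ)) =
      {M | ∃ x y : GaussianInt,
        M = !![GaussianInt.toComplex x, -(starRingEnd ℂ) (GaussianInt.toComplex y);
               GaussianInt.toComplex y, (starRingEnd ℂ) (GaussianInt.toComplex x)]} := by
  suffices closure_eq : AddSubgroup.closure ((fun u : (Matrix (Fin 2) (Fin 2) ℂ)ˣ =>
      (u : Matrix (Fin 2) (Fin 2) ℂ)) '' (rho4.range : Set (Matrix (Fin 2) (Fin 2) ℂ)ˣ)) =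
      lipschitzSubring.toAddSubgroup from
    congrArg SetLike.coe closure_eq
  apply le_antisymm
  · rw [AddSubgroup.closure_le]
    rintro _ ⟨u, hu, rfl⟩
    exact lipschitzSubring.toSubmonoid.val_mem_of_mem_units (range_rho4_le_units hu)
  · rintro _ ⟨x, y, rfl⟩
    refine lipschitzMatrix_mem_of_forall_rho4_mem (fun g => ?_) x y
    exact AddSubgroup.subset_closure (Set.mem_image_of_mem _ (MonoidHom.mem_range.2 ⟨g, rfl⟩))
end
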